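/- arXiv:2512.24096 — 2 statements merged into one kernel-verified Lean document; each statement's English description precedes it below -/
import Mathlib

section
/- Let ℛ* be a convex set of collections {π_z}_{z∈𝒵} of functions 𝒴² × {0,1}² → [0,1], and let 𝒫* be the family of primitive distributions satisfying IV validity whose collection of marginal pmfs belongs to ℛ*. Then the identified set Θ_I(P; 𝒫*) is a convex subset of ℝ (an interval); its supremum equals the supremum, over collections {π_z}_{z∈𝒵} ∈ ℛ* satisfying (1) data matching: P(Y=y, D=1 | Z=z) = Σ_{y0,d1} π_z(y0, y, 1, d1) and P(Y=y, D=0 | Z=z) = Σ_{y1,d1} π_z(y, y1, 0, d1) for all y, z; (2) common potential-outcome marginal: Σ_{(d0,d1)} π_z(y0,y1,d0,d1) = Σ_{(d0,d1)} π_1(y0,y1,d0,d1) for all y0, y1, z; and (3) each π_z is a pmf; of the objective Σ_{z∈𝒵} P(Z=z) · Σ_{(y0,y1,d0,d1)∈𝒴²×{0,1}²} (d1·y1 + (1−d1)·y0) · π_z(y0, y1, d0, d1); and its infimum equals the analogous infimum of the same objective over the same constraint set. -/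
/-!
An IV-valid primitive distribution is exactly a product of a law `ν` of the potential variables
`(Y(0), Y(1), D(·,·))` with a law of `Z`; its judge marginals are the pushforwards of `ν`, it
generates `P` iff those marginals match the data, and then `θ` is the objective evaluated at them.
Conversely, a collection satisfying the constraints is the collection of marginals of some `ν`:
given `(Y(0), Y(1))`, draw the judges' treatment pairs independently from the conditional pmfs
`π_z(· | y0, y1)`, which is possible because all `π_z` share the same `(Y(0), Y(1))` marginal.
Hence the identified set is the image of the convex constraint set under the linear objective.
-/

open Finset
open scoped Classical

namespace IVPol

/-- Sample space of model primitives `(Y(0), Y(1), D(·,·), Z)`: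
a point records the two potential outcomes (elements of the finite outcome set `Y ⊆ ℝ`),
the potential treatments `D(z, a) ∈ {0,1}` for every judge `z` and policy `a`,
and the instrument value `Z`. -/
abbrev Prim (Y : Finset ℝ) (K : ℕ) := Y × Y × (Fin K → Bool → Bool) × Fin K

/-- Sample space of the observed data `(Y, D, Z)`. -/
abbrev Obs (Y : Finset ℝ) (K : ℕ) := Y × Bool × Fin K

/-- A probability distribution on a finite type, given by its pmf. -/
structure Dist (α : Type*) [Fintype α] where
  p : α → ℝ
  nonneg : ∀ a, 0 ≤ p a
  sum_one : ∑ a, p a = 1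

/-- Probability of an event. -/
noncomputable def Dist.pr {α : Type*} [Fintype α] (P : Dist α) (A : Set α) : ℝ :=
  ∑ a, if a ∈ A then P.p a else 0

/-- Expectation of a real-valued random variable. -/
noncomputable def Dist.exp {α : Type*} [Fintype α] (P : Dist α) (f : α → ℝ) : ℝ :=
  ∑ a, P.p a * f a

variable {Y : Finset ℝ} {K : ℕ}

/-- Potential treatment `D(z, a)`. -/
def pd (ω : Prim Y K) (z : Fin K) (a : Bool) : Bool := ω.2.2.1 z a

/-- The instrument `Z`. -/
def pz (ω : Prim Y K) : Fin K := ω.2.2.2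

/-- Observed treatment `D = D(Z, 0)`. -/
def obsD (ω : Prim Y K) : Bool := pd ω (pz ω) false

/-- Observed outcome `Y = Y(D(Z, 0))`. -/
def obsY (ω : Prim Y K) : Y := if obsD ω then ω.2.1 else ω.1

/-- Counterfactual outcome `Y(D(Z, 1))`. -/
noncomputable def cfY (ω : Prim Y K) : ℝ :=
  if pd ω (pz ω) true then (ω.2.1 : ℝ) else (ω.1 : ℝ)

/-- IV validity: `(Y(0), Y(1), D(·,·))` is independent of `Z`. -/
def IVvalid (Ps : Dist (Prim Y K)) : Prop :=
  ∀ (a b : Y) (g : Fin K → Bool → Bool) (z : Fin K),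
    Ps.pr {ω | ω.1 = a ∧ ω.2.1 = b ∧ ω.2.2.1 = g ∧ ω.2.2.2 = z}
      = Ps.pr {ω | ω.1 = a ∧ ω.2.1 = b ∧ ω.2.2.1 = g} * Ps.pr {ω | ω.2.2.2 = z}

/-- `Ps` generates the observed data distribution `P`:
the law of `(Y(D(Z,0)), D(Z,0), Z)` under `Ps` is `P`. -/
def generates (Ps : Dist (Prim Y K)) (P : Dist (Obs Y K)) : Prop :=
  ∀ (y : Y) (d : Bool) (z : Fin K),
    P.p (y, d, z) = Ps.pr {ω | obsY ω = y ∧ obsD ω = d ∧ pz ω = z}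

/-- Marginal pmf of judge `z`:
`π_z(y0, y1, d0, d1) = P*(Y(0)=y0, Y(1)=y1, D(z,0)=d0, D(z,1)=d1)`. -/
noncomputable def marginal (Ps : Dist (Prim Y K)) (z : Fin K) (y0 y1 : Y) (d0 d1 : Bool) : ℝ :=
  Ps.pr {ω | ω.1 = y0 ∧ ω.2.1 = y1 ∧ pd ω z false = d0 ∧ pd ω z true = d1}

/-- Probability of `Z = z` under the observed distribution. -/
noncomputable def prZ (P : Dist (Obs Y K)) (z : Fin K) : ℝ := P.pr {o | o.2.2 = z}

/-- Conditional probability `P(Y = y, D = d | Z = z)` of the observed data. -/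
noncomputable def obsCond (P : Dist (Obs Y K)) (y : Y) (d : Bool) (z : Fin K) : ℝ :=
  P.p (y, d, z) / prZ P z

/-- A collection of candidate marginal pmfs, one for each judge. -/
abbrev Coll (Y : Finset ℝ) (K : ℕ) := Fin K → Y → Y → Bool → Bool → ℝ

/-- The collection of marginal pmfs of a primitive distribution. -/
noncomputable def marginalColl (Ps : Dist (Prim Y K)) : Coll Y K :=
  fun z y0 y1 d0 d1 => marginal Ps z y0 y1 d0 d1

/-- Conditions (1)–(3) of Proposition 1: data matching, common potential-outcome
marginal, and validity of the pmfs. -/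
def baseConstraints [NeZero K] (P : Dist (Obs Y K)) (π : Coll Y K) : Prop :=
  (∀ (y : Y) (z : Fin K),
      obsCond P y true z = ∑ y0 : Y, ∑ d1 : Bool, π z y0 y true d1) ∧
  (∀ (y : Y) (z : Fin K),
      obsCond P y false z = ∑ y1 : Y, ∑ d1 : Bool, π z y y1 false d1) ∧
  (∀ (y0 y1 : Y) (z : Fin K),
      ∑ d0 : Bool, ∑ d1 : Bool, π z y0 y1 d0 d1
        = ∑ d0 : Bool, ∑ d1 : Bool, π 0 y0 y1 d0 d1) ∧
  (∀ (z : Fin K) (y0 y1 : Y) (d0 d1 : Bool), 0 ≤ π z y0 y1 d0 d1) ∧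
  (∀ z : Fin K, ∑ y0 : Y, ∑ y1 : Y, ∑ d0 : Bool, ∑ d1 : Bool, π z y0 y1 d0 d1 = 1)

/-- The linear-programming objective
`∑_z P(Z=z) ∑_{y0,y1,d0,d1} (d1·y1 + (1−d1)·y0) · π_z(y0,y1,d0,d1)`. -/
noncomputable def objective (P : Dist (Obs Y K)) (π : Coll Y K) : ℝ :=
  ∑ z : Fin K, prZ P z *
    ∑ y0 : Y, ∑ y1 : Y, ∑ d0 : Bool, ∑ d1 : Bool,
      (if d1 then (y1 : ℝ) else (y0 : ℝ)) * π z y0 y1 d0 d1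

/-- Average counterfactual outcome `θ = E[Y(D(Z,1))]`. -/
noncomputable def theta (Ps : Dist (Prim Y K)) : ℝ := Ps.exp cfY

/-- The identified set for the average counterfactual outcome. -/
def ThetaI (P : Dist (Obs Y K)) (fam : Set (Dist (Prim Y K))) : Set ℝ :=
  {t | ∃ Ps ∈ fam, generates Ps P ∧ theta Ps = t}

namespace Dist

variable {α β γ : Type*} [Fintype α] [Fintype β] [Fintype γ]

theorem ext_p {P Q : Dist α} (h : P.p = Q.p) : P = Q := by
  cases P; cases Q; cases h; rfl

theorem pr_nonneg (P : Dist α) (A : Set α) : 0 ≤ P.pr A :=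
  sum_nonneg fun a _ => by split_ifs <;> simp [P.nonneg a]

theorem pr_eq_exp (P : Dist α) (A : Set α) :
    P.pr A = P.exp fun a => if a ∈ A then 1 else 0 := by
  simp [pr, Dist.exp]

theorem pr_singleton (P : Dist α) (x : α) : P.pr {x} = P.p x := by
  simp [pr]

theorem sum_mul_pr_fiber (P : Dist α) (f : α → β) (φ : β → ℝ) :
    ∑ b, φ b * P.pr {a | f a = b} = P.exp (φ ∘ f) := by
  simp only [pr, Dist.exp, Set.mem_ofPred_eq, mul_sum, mul_ite, mul_zero]
  rw [sum_comm]
  simp [mul_comm]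

noncomputable def map (P : Dist α) (f : α → β) : Dist β where
  p b := P.pr {a | f a = b}
  nonneg _ := P.pr_nonneg _
  sum_one := by simpa [Dist.exp, P.sum_one] using P.sum_mul_pr_fiber f 1

theorem exp_map (P : Dist α) (f : α → β) (φ : β → ℝ) :
    (P.map f).exp φ = P.exp (φ ∘ f) := by
  rw [← sum_mul_pr_fiber]
  exact sum_congr rfl fun _ _ => mul_comm _ _

theorem pr_map (P : Dist α) (f : α → β) (A : Set β) :
    (P.map f).pr A = P.pr (f ⁻¹' A) := by
  rw [pr_eq_exp, exp_map, pr_eq_exp]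
  rfl

theorem map_map (P : Dist α) (f : α → β) (g : β → γ) :
    (P.map f).map g = P.map (g ∘ f) :=
  ext_p <| funext fun _ => pr_map P f _

end Dist

section Coupling

variable {ι β : Type*} [Fintype ι]

theorem sum_mul_prod_apply [DecidableEq ι] [Fintype β] (f : ι → β → ℝ) (φ : β → ℝ) (i : ι) :
    ∑ g : ι → β, φ (g i) * ∏ j, f j (g j)
      = (∑ b, φ b * f i b) * ∏ j ∈ univ.erase i, ∑ b, f j b := by
  have hmark : ∀ g : ι → β,
      φ (g i) * ∏ j, f j (g j) = ∏ j, (if j = i then φ (g j) else 1) * f j (g j) := by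
    intro g
    rw [prod_mul_distrib, prod_ite_eq' univ i, if_pos (mem_univ i)]
  simp_rw [hmark, ← Fintype.prod_sum fun j b => (if j = i then φ b else 1) * f j b]
  rw [← mul_prod_erase univ _ (mem_univ i)]
  simp only [if_true]
  congr 1
  refine prod_congr rfl fun j hj => ?_
  simp [ne_of_mem_erase hj]

/-- The independent coupling of the pmfs `w i / m`, rescaled to total mass `m`. -/
noncomputable def indepCoupling (m : ℝ) (w : ι → β → ℝ) (g : ι → β) : ℝ :=
  m * ∏ i, w i (g i) / m

theorem indepCoupling_nonneg {m : ℝ} {w : ι → β → ℝ} (hm : 0 ≤ m) (hw : ∀ i b, 0 ≤ w i b)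
    (g : ι → β) : 0 ≤ indepCoupling m w g :=
  mul_nonneg hm <| prod_nonneg fun i _ => div_nonneg (hw i _) hm

theorem sum_mul_indepCoupling [DecidableEq ι] [Fintype β] {m : ℝ} {w : ι → β → ℝ}
    (hw : ∀ i b, 0 ≤ w i b) (hm : ∀ i, ∑ b, w i b = m) (φ : β → ℝ) (i : ι) :
    ∑ g, φ (g i) * indepCoupling m w g = ∑ b, φ b * w i b := by
  rcases eq_or_ne m 0 with rfl | hm0
  · have hwi : ∀ b, w i b = 0 := fun b =>
      (sum_eq_zero_iff_of_nonneg fun b _ => hw i b).1 (hm i) b (mem_univ b)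
    simp [indepCoupling, hwi]
  · have hnorm : ∀ j, ∑ b, w j b / m = 1 := fun j => by rw [← sum_div, hm j, div_self hm0]
    calc ∑ g, φ (g i) * indepCoupling m w g
        = m * ∑ g : ι → β, φ (g i) * ∏ j, w j (g j) / m := by
          simp only [indepCoupling, mul_sum]
          exact sum_congr rfl fun g _ => mul_left_comm _ _ _
      _ = ∑ b, φ b * w i b := by
          rw [sum_mul_prod_apply (fun j b => w j b / m)]
          simp only [hnorm, prod_const_one, mul_one, mul_sum]
          exact sum_congr rfl fun b _ => by field_simp

end Coupling

/-- The potential variables `(Y(0), Y(1), D(·,·))`. -/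
abbrev Pot (Y : Finset ℝ) (K : ℕ) := Y × Y × (Fin K → Bool → Bool)

def pot (ω : Prim Y K) : Pot Y K := (ω.1, ω.2.1, ω.2.2.1)

/-- The variables `(Y(0), Y(1), D(z,0), D(z,1))` that judge `z`'s marginal pmf describes. -/
def judgeView (z : Fin K) (u : Pot Y K) : Y × Y × Bool × Bool :=
  (u.1, u.2.1, u.2.2 z false, u.2.2 z true)

/-- The observation `(Y(D(z,0)), D(z,0))` read off `judgeView z`. -/
def observe (x : Y × Y × Bool × Bool) : Y × Bool :=
  (if x.2.2.1 then x.2.1 else x.1, x.2.2.1)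

/-- The counterfactual outcome `Y(D(z,1))` read off `judgeView z`. -/
noncomputable def counterfactual (x : Y × Y × Bool × Bool) : ℝ :=
  if x.2.2.2 then (x.2.1 : ℝ) else (x.1 : ℝ)

noncomputable def collOf (ν : Dist (Pot Y K)) : Coll Y K :=
  fun z y0 y1 d0 d1 => (ν.map (judgeView z)).p (y0, y1, d0, d1)

theorem collOf_apply (ν : Dist (Pot Y K)) (z : Fin K) (y0 y1 : Y) (d0 d1 : Bool) :
    collOf ν z y0 y1 d0 d1
      = ∑ g, if g z false = d0 ∧ g z true = d1 then ν.p (y0, y1, g) else 0 := by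
  simp [collOf, Dist.map, Dist.pr, judgeView, Fintype.sum_prod_type, ite_and]

theorem marginalColl_eq_collOf (Ps : Dist (Prim Y K)) :
    marginalColl Ps = collOf (Ps.map pot) := by
  funext z y0 y1 d0 d1
  rw [collOf, Dist.map_map]
  show Ps.pr _ = Ps.pr _
  congr 1
  ext ω
  simp [judgeView, pot, pd]

theorem sum_prim {M : Type*} [AddCommMonoid M] (f : Prim Y K → M) :
    ∑ ω, f ω = ∑ u : Pot Y K, ∑ z, f (u.1, u.2.1, u.2.2, z) := by
  simp only [Fintype.sum_prod_type]

noncomputable def indepPrim (ν : Dist (Pot Y K)) (ρ : Dist (Fin K)) : Dist (Prim Y K) where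
  p ω := ν.p (pot ω) * ρ.p (pz ω)
  nonneg ω := mul_nonneg (ν.nonneg _) (ρ.nonneg _)
  sum_one := by
    simp [sum_prim, pot, pz, ← mul_sum, ρ.sum_one, ν.sum_one]

section indepPrim

variable (ν : Dist (Pot Y K)) (ρ : Dist (Fin K))

theorem exp_indepPrim (F : Fin K → Pot Y K → ℝ) :
    (indepPrim ν ρ).exp (fun ω => F (pz ω) (pot ω)) = ∑ z, ρ.p z * ν.exp (F z) := by
  simp only [Dist.exp, indepPrim, sum_prim, pot, pz, mul_sum]
  rw [sum_comm]
  exact sum_congr rfl fun z _ => sum_congr rfl fun u _ => by ring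

theorem pr_indepPrim (S : Fin K → Set (Pot Y K)) :
    (indepPrim ν ρ).pr {ω | pot ω ∈ S (pz ω)} = ∑ z, ρ.p z * ν.pr (S z) := by
  simp only [Dist.pr_eq_exp]
  exact exp_indepPrim ν ρ fun z u => if u ∈ S z then 1 else 0

theorem map_pot_indepPrim : (indepPrim ν ρ).map pot = ν := by
  refine Dist.ext_p (funext fun u => ?_)
  change (indepPrim ν ρ).pr {ω | pot ω ∈ ({u} : Set (Pot Y K))} = ν.p u
  rw [pr_indepPrim ν ρ fun _ => {u}, ← sum_mul, ρ.sum_one, one_mul, Dist.pr_singleton]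

theorem map_pz_indepPrim : (indepPrim ν ρ).map pz = ρ := by
  refine Dist.ext_p (funext fun z => ?_)
  change (indepPrim ν ρ).pr {ω | pot ω ∈ {_u | pz ω = z}} = ρ.p z
  rw [pr_indepPrim ν ρ fun z' => {_u | z' = z}, sum_eq_single z]
  · simp [Dist.pr, ν.sum_one]
  · intro z' _ hz'
    simp [Dist.pr, hz']
  · simp

theorem pr_obs_indepPrim (y : Y) (d : Bool) (z : Fin K) :
    (indepPrim ν ρ).pr {ω | obsY ω = y ∧ obsD ω = d ∧ pz ω = z}
      = ρ.p z * (ν.map (observe ∘ judgeView z)).p (y, d) := by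
  have hset : {ω : Prim Y K | obsY ω = y ∧ obsD ω = d ∧ pz ω = z}
      = {ω | pot ω ∈ {u | pz ω = z ∧ observe (judgeView (pz ω) u) = (y, d)}} := by
    ext ω
    simp only [Set.mem_ofPred_eq, obsY, obsD, observe, judgeView, pot, pd, Prod.mk.injEq]
    tauto
  rw [hset, pr_indepPrim ν ρ fun z' => {u | z' = z ∧ observe (judgeView z' u) = (y, d)},
    sum_eq_single z]
  · simp [Dist.map]
  · intro z' _ hz'
    simp [Dist.pr, hz']
  · simp

end indepPrim

theorem ivValid_iff_p_eq (Ps : Dist (Prim Y K)) :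
    IVvalid Ps ↔ ∀ ω, Ps.p ω = (Ps.map pot).p (pot ω) * (Ps.map pz).p (pz ω) := by
  have hpoint : ∀ a b g z,
      {ω : Prim Y K | ω.1 = a ∧ ω.2.1 = b ∧ ω.2.2.1 = g ∧ ω.2.2.2 = z} = {(a, b, g, z)} := by
    intros; ext; simp [Prod.ext_iff]
  have hpot : ∀ a b g,
      {ω : Prim Y K | ω.1 = a ∧ ω.2.1 = b ∧ ω.2.2.1 = g} = {ω | pot ω = (a, b, g)} := by
    intros; ext; simp [pot]
  simp only [IVvalid, hpoint, hpot, Dist.pr_singleton, Prod.forall]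
  rfl

theorem ivValid_iff_exists_indepPrim (Ps : Dist (Prim Y K)) :
    IVvalid Ps ↔ ∃ ν ρ, Ps = indepPrim ν ρ := by
  constructor
  · exact fun h => ⟨_, _, Dist.ext_p (funext ((ivValid_iff_p_eq Ps).1 h))⟩
  · rintro ⟨ν, ρ, rfl⟩
    rw [ivValid_iff_p_eq, map_pot_indepPrim, map_pz_indepPrim]
    exact fun _ => rfl

theorem marginalColl_indepPrim (ν : Dist (Pot Y K)) (ρ : Dist (Fin K)) :
    marginalColl (indepPrim ν ρ) = collOf ν := by
  rw [marginalColl_eq_collOf, map_pot_indepPrim]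

theorem prZ_eq_sum (P : Dist (Obs Y K)) (z : Fin K) : prZ P z = ∑ y, ∑ d, P.p (y, d, z) := by
  simp only [prZ, Dist.pr, Set.mem_ofPred_eq, Fintype.sum_prod_type]
  refine sum_congr rfl fun y _ => sum_congr rfl fun d _ => ?_
  rw [sum_eq_single z, if_pos rfl]
  · exact fun _ _ h => if_neg h
  · simp

theorem generates_indepPrim_iff (ν : Dist (Pot Y K)) (ρ : Dist (Fin K)) (P : Dist (Obs Y K)) :
    generates (indepPrim ν ρ) P ↔ (∀ z, ρ.p z = prZ P z) ∧
      ∀ y d z, P.p (y, d, z) = prZ P z * (ν.map (observe ∘ judgeView z)).p (y, d) := by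
  simp only [generates, pr_obs_indepPrim]
  constructor
  · intro h
    have hρ : ∀ z, ρ.p z = prZ P z := fun z => by
      simp only [prZ_eq_sum, h, ← mul_sum, ← Fintype.sum_prod_type', Prod.mk.eta, Dist.sum_one,
        mul_one]
    exact ⟨hρ, fun y d z => by rw [h, hρ]⟩
  · rintro ⟨hρ, h⟩ y d z
    rw [h, hρ]

theorem objective_collOf (P : Dist (Obs Y K)) (ν : Dist (Pot Y K)) :
    objective P (collOf ν) = ∑ z, prZ P z * (ν.map (judgeView z)).exp counterfactual := by
  simp only [objective, collOf, Dist.exp, counterfactual, Fintype.sum_prod_type, mul_comm]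

theorem theta_indepPrim {P : Dist (Obs Y K)} (ν : Dist (Pot Y K)) (ρ : Dist (Fin K))
    (hρ : ∀ z, ρ.p z = prZ P z) : theta (indepPrim ν ρ) = objective P (collOf ν) := by
  simp only [objective_collOf, Dist.exp_map, ← hρ]
  exact exp_indepPrim ν ρ fun z u => counterfactual (judgeView z u)

section JudgeView

variable (Q : Dist (Y × Y × Bool × Bool))

theorem map_observe_apply_true (y : Y) :
    (Q.map observe).p (y, true) = ∑ y0, ∑ d1, Q.p (y0, y, true, d1) := by
  simp [Dist.map, Dist.pr, observe, Fintype.sum_prod_type, sum_add_distrib]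

theorem map_observe_apply_false (y : Y) :
    (Q.map observe).p (y, false) = ∑ y1, ∑ d1, Q.p (y, y1, false, d1) := by
  simp [Dist.map, Dist.pr, observe, Fintype.sum_prod_type, sum_add_distrib]

theorem map_outcomes_apply (y0 y1 : Y) :
    (Q.map fun x => (x.1, x.2.1)).p (y0, y1) = ∑ d0, ∑ d1, Q.p (y0, y1, d0, d1) := by
  simp [Dist.map, Dist.pr, Fintype.sum_prod_type, sum_add_distrib, ite_and]

end JudgeView

section collOf

variable (ν : Dist (Pot Y K)) (z : Fin K)

theorem sum_collOf_treated (y : Y) :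
    ∑ y0, ∑ d1, collOf ν z y0 y true d1 = (ν.map (observe ∘ judgeView z)).p (y, true) := by
  rw [← Dist.map_map, map_observe_apply_true]
  rfl

theorem sum_collOf_untreated (y : Y) :
    ∑ y1, ∑ d1, collOf ν z y y1 false d1 = (ν.map (observe ∘ judgeView z)).p (y, false) := by
  rw [← Dist.map_map, map_observe_apply_false]
  rfl

theorem sum_collOf_outcomes (y0 y1 : Y) :
    ∑ d0, ∑ d1, collOf ν z y0 y1 d0 d1 = (ν.map fun u => (u.1, u.2.1)).p (y0, y1) := by
  rw [show (fun u : Pot Y K => (u.1, u.2.1)) = (fun x => (x.1, x.2.1)) ∘ judgeView z from rfl,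
    ← Dist.map_map, map_outcomes_apply]
  rfl

end collOf

theorem baseConstraints_collOf_iff [NeZero K] {P : Dist (Obs Y K)} (hPz : ∀ z, 0 < prZ P z)
    (ν : Dist (Pot Y K)) : baseConstraints P (collOf ν) ↔
      ∀ y d z, P.p (y, d, z) = prZ P z * (ν.map (observe ∘ judgeView z)).p (y, d) := by
  have hcond : ∀ y d z, obsCond P y d z = (ν.map (observe ∘ judgeView z)).p (y, d) ↔
      P.p (y, d, z) = prZ P z * (ν.map (observe ∘ judgeView z)).p (y, d) := fun y d z => by
    rw [obsCond, div_eq_iff (hPz z).ne', mul_comm]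
  simp only [baseConstraints, sum_collOf_treated, sum_collOf_untreated, sum_collOf_outcomes,
    hcond]
  constructor
  · rintro ⟨htreated, huntreated, -⟩ y (_ | _) z
    exacts [huntreated y z, htreated y z]
  · exact fun h => ⟨fun y z => h y true z, fun y z => h y false z, fun _ _ _ => trivial,
      fun _ _ _ _ _ => Dist.pr_nonneg _ _,
      fun _ => by simpa only [Fintype.sum_prod_type] using (ν.map fun u => (u.1, u.2.1)).sum_one⟩

theorem sum_bool_arrow {M : Type*} [AddCommMonoid M] (F : Bool → Bool → M) :
    ∑ h : Bool → Bool, F (h false) (h true) = ∑ d0, ∑ d1, F d0 d1 := by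
  rw [← Fintype.sum_prod_type']
  exact Fintype.sum_equiv (Equiv.boolArrowEquivProd Bool) _ _ fun _ => rfl

/-- Given `(Y(0), Y(1)) = (y0, y1)`, the judges' treatment pairs are drawn independently from
the conditional pmfs that the collection `π` prescribes. -/
noncomputable def couplingOf [NeZero K] (π : Coll Y K) (u : Pot Y K) : ℝ :=
  indepCoupling (∑ d0, ∑ d1, π 0 u.1 u.2.1 d0 d1)
    (fun z h => π z u.1 u.2.1 (h false) (h true)) u.2.2

section couplingOf

variable [NeZero K] {π : Coll Y K}

theorem sum_mul_couplingOf (hnn : ∀ z y0 y1 d0 d1, 0 ≤ π z y0 y1 d0 d1)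
    (hcm : ∀ y0 y1 z, ∑ d0, ∑ d1, π z y0 y1 d0 d1 = ∑ d0, ∑ d1, π 0 y0 y1 d0 d1)
    (y0 y1 : Y) (z : Fin K) (φ : Bool → Bool → ℝ) :
    ∑ g : Fin K → Bool → Bool, φ (g z false) (g z true) * couplingOf π (y0, y1, g)
      = ∑ d0, ∑ d1, φ d0 d1 * π z y0 y1 d0 d1 := by
  have h := sum_mul_indepCoupling (fun z (h : Bool → Bool) => hnn z y0 y1 (h false) (h true))
    (fun z => by rw [sum_bool_arrow (π z y0 y1), hcm])
    (fun h : Bool → Bool => φ (h false) (h true)) z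
  rw [sum_bool_arrow fun d0 d1 => φ d0 d1 * π z y0 y1 d0 d1] at h
  exact h

theorem exists_collOf_eq (hnn : ∀ z y0 y1 d0 d1, 0 ≤ π z y0 y1 d0 d1)
    (hcm : ∀ y0 y1 z, ∑ d0, ∑ d1, π z y0 y1 d0 d1 = ∑ d0, ∑ d1, π 0 y0 y1 d0 d1)
    (hsum : ∑ y0, ∑ y1, ∑ d0, ∑ d1, π 0 y0 y1 d0 d1 = 1) :
    ∃ ν : Dist (Pot Y K), collOf ν = π := by
  have hmass : ∀ y0 y1, ∑ g, couplingOf π (y0, y1, g) = ∑ d0, ∑ d1, π 0 y0 y1 d0 d1 := by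
    intro y0 y1
    simpa using sum_mul_couplingOf hnn hcm y0 y1 0 fun _ _ => 1
  have hnonneg : ∀ u, 0 ≤ couplingOf π u := fun u => indepCoupling_nonneg
    (sum_nonneg fun _ _ => sum_nonneg fun _ _ => hnn _ _ _ _ _) (fun _ _ => hnn _ _ _ _ _) _
  refine ⟨⟨couplingOf π, hnonneg, ?_⟩, ?_⟩
  · simp only [Fintype.sum_prod_type, hmass, hsum]
  · funext z y0 y1 d0 d1
    calc collOf _ z y0 y1 d0 d1
        = ∑ g : Fin K → Bool → Bool,
            (if g z false = d0 ∧ g z true = d1 then 1 else 0) * couplingOf π (y0, y1, g) := by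
          simp only [collOf_apply, boole_mul]
      _ = ∑ e0, ∑ e1, (if e0 = d0 ∧ e1 = d1 then 1 else 0) * π z y0 y1 e0 e1 :=
          sum_mul_couplingOf hnn hcm y0 y1 z fun e0 e1 => if e0 = d0 ∧ e1 = d1 then 1 else 0
      _ = π z y0 y1 d0 d1 := by simp [ite_and]

end couplingOf

theorem isLinearMap_objective (P : Dist (Obs Y K)) : IsLinearMap ℝ (objective P) where
  map_add π₁ π₂ := by simp only [objective, Pi.add_apply, mul_add, sum_add_distrib]
  map_smul c π := by
    simp only [objective, Pi.smul_apply, smul_eq_mul, mul_sum]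
    exact sum_congr rfl fun _ _ => sum_congr rfl fun _ _ => sum_congr rfl fun _ _ =>
      sum_congr rfl fun _ _ => sum_congr rfl fun _ _ => by ring

theorem convex_baseConstraints [NeZero K] (P : Dist (Obs Y K)) :
    Convex ℝ {π : Coll Y K | baseConstraints P π} := by
  rintro π₁ ⟨h₁t, h₁u, h₁m, h₁n, h₁s⟩ π₂ ⟨h₂t, h₂u, h₂m, h₂n, h₂s⟩ a b ha hb hab
  refine ⟨fun y z => ?_, fun y z => ?_, fun y0 y1 z => ?_, fun z y0 y1 d0 d1 => ?_, fun z => ?_⟩ <;>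
    simp only [Pi.add_apply, Pi.smul_apply, smul_eq_mul, sum_add_distrib, ← mul_sum]
  · rw [← h₁t, ← h₂t, ← add_mul, hab, one_mul]
  · rw [← h₁u, ← h₂u, ← add_mul, hab, one_mul]
  · rw [h₁m, h₂m]
  · exact add_nonneg (mul_nonneg ha (h₁n ..)) (mul_nonneg hb (h₂n ..))
  · rw [h₁s, h₂s, mul_one, mul_one, hab]

theorem thetaI_eq_image [NeZero K] {P : Dist (Obs Y K)} (hPz : ∀ z, 0 < prZ P z)
    (R : Set (Coll Y K)) :
    ThetaI P {Ps | IVvalid Ps ∧ marginalColl Ps ∈ R}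
      = objective P '' {π | π ∈ R ∧ baseConstraints P π} := by
  ext t
  constructor
  · rintro ⟨Ps, ⟨hIV, hR⟩, hgen, rfl⟩
    obtain ⟨ν, ρ, rfl⟩ := (ivValid_iff_exists_indepPrim Ps).1 hIV
    obtain ⟨hρ, hobs⟩ := (generates_indepPrim_iff ν ρ P).1 hgen
    rw [marginalColl_indepPrim] at hR
    exact ⟨collOf ν, ⟨hR, (baseConstraints_collOf_iff hPz ν).2 hobs⟩,
      (theta_indepPrim ν ρ hρ).symm⟩
  · rintro ⟨π, ⟨hR, hπ⟩, rfl⟩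
    obtain ⟨ν, rfl⟩ := exists_collOf_eq hπ.2.2.2.1 hπ.2.2.1 (hπ.2.2.2.2 0)
    let ρ : Dist (Fin K) := P.map fun o => o.2.2
    refine ⟨indepPrim ν ρ, ⟨(ivValid_iff_exists_indepPrim _).2 ⟨ν, ρ, rfl⟩, ?_⟩,
      (generates_indepPrim_iff ν ρ P).2 ⟨fun _ => rfl, (baseConstraints_collOf_iff hPz ν).1 hπ⟩,
      theta_indepPrim ν ρ fun _ => rfl⟩
    rwa [marginalColl_indepPrim]

/-- Corollary 1: with only IV validity and convex marginal
restrictions `ℛ*`, the identified set for `θ` is an interval whose endpoints are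
the optimal values of the linear program over collections of marginals. -/
theorem statement1 {Y : Finset ℝ} {K : ℕ} [NeZero K]
    (P : Dist (Obs Y K)) (hPz : ∀ z : Fin K, 0 < prZ P z)
    (R : Set (Coll Y K)) (hR : Convex ℝ R) :
    Convex ℝ (ThetaI P {Ps | IVvalid Ps ∧ marginalColl Ps ∈ R}) ∧
    sSup (ThetaI P {Ps | IVvalid Ps ∧ marginalColl Ps ∈ R})
      = sSup (objective P '' {π | π ∈ R ∧ baseConstraints P π}) ∧
    sInf (ThetaI P {Ps | IVvalid Ps ∧ marginalColl Ps ∈ R})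
      = sInf (objective P '' {π | π ∈ R ∧ baseConstraints P π}) := by
  rw [thetaI_eq_image hPz R]
  exact ⟨(hR.inter (convex_baseConstraints P)).is_linear_image (isLinearMap_objective P),
    rfl, rfl⟩

end IVPol
end

section
/- Fix α ∈ [0,1] and an observed data distribution P with P(Z=z) > 0 for all z. Set α₀ = P(D=1), let z_max ∈ 𝒵 satisfy α_max := P(D=1 | Z=z_max) ≥ P(D=1 | Z=z) for all z, and suppose α₀ < α. Let 𝒫*_α be the set of primitive distributions satisfying IV validity, policy monotonicity, P*(D(Z,1)=1) = α, and P*(Y(0)=0) = 1. Then for every P* ∈ 𝒫*_I(P; 𝒫*_α) and every t ∈ ℝ: F^lb(t) ≤ P*(Y(1) ≤ t | D(Z,1) > D(Z,0)) ≤ F^ub(t), where F^lb_{Y(1)}(t) := P(Y ≤ t | D=1, Z=z_max)·α_max; F^ub_{Y(1)}(t) := P(Y ≤ t | D=1, Z=z_max)·α_max + 1 − α_max; F^lb_{Y(1)|D(Z,0)=0}(t) := max{ (F^lb_{Y(1)}(t) − α₀·P(Y ≤ t | D=1)) / (1 − α₀), 0 }; F^ub_{Y(1)|D(Z,0)=0}(t)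 := min{ (F^ub_{Y(1)}(t) − α₀·P(Y ≤ t | D=1)) / (1 − α₀), 1 }; F^lb(t) := max{ ((1−α₀)/(α−α₀))·F^lb_{Y(1)|D(Z,0)=0}(t) − (1−α)/(α−α₀), 0 }; and F^ub(t) := min{ ((1−α₀)/(α−α₀))·F^ub_{Y(1)|D(Z,0)=0}(t), 1 }. -/
open MeasureTheory

namespace IVM

/-- Sample space of model primitives `(Y(0), Y(1), D(·,·), Z)`: the two potential
outcomes are real numbers, the potential treatments `D(z, a) ∈ {0,1}` are recorded
for every judge `z` and policy `a`, and `Z` is the instrument. -/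
abbrev PrimM (K : ℕ) := ℝ × ℝ × (Fin K → Bool → Bool) × Fin K

/-- Sample space of the observed data `(Y, D, Z)`. -/
abbrev ObsM (K : ℕ) := ℝ × Bool × Fin K

variable {K : ℕ}

/-- Potential treatment `D(z, a)`. -/
def pd (ω : PrimM K) (z : Fin K) (a : Bool) : Bool := ω.2.2.1 z a

/-- The instrument `Z`. -/
def pz (ω : PrimM K) : Fin K := ω.2.2.2

/-- Observed treatment `D = D(Z, 0)`. -/
def obsD (ω : PrimM K) : Bool := pd ω (pz ω) false

/-- Observed outcome `Y = Y(D(Z, 0))`. -/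
noncomputable def obsY (ω : PrimM K) : ℝ := if obsD ω then ω.2.1 else ω.1

/-- Counterfactual outcome `Y(D(Z, 1))`. -/
noncomputable def cfY (ω : PrimM K) : ℝ := if pd ω (pz ω) true then ω.2.1 else ω.1

/-- The map from primitives to observed data `(Y, D, Z)`. -/
noncomputable def obsMap (ω : PrimM K) : ObsM K := (obsY ω, obsD ω, pz ω)

/-- IV validity: `(Y(0), Y(1), D(·,·))` is independent of `Z`. -/
def IVvalid (μ : Measure (PrimM K)) : Prop :=
  ∀ (A : Set (ℝ × ℝ × (Fin K → Bool → Bool))) (z : Fin K), MeasurableSet A →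
    μ {ω | (ω.1, ω.2.1, ω.2.2.1) ∈ A ∧ pz ω = z}
      = μ {ω | (ω.1, ω.2.1, ω.2.2.1) ∈ A} * μ {ω | pz ω = z}

/-- `μ` generates the observed data distribution `P`:
`P` is the law of `(Y(D(Z,0)), D(Z,0), Z)` under `μ`. -/
def generates (μ : Measure (PrimM K)) (P : Measure (ObsM K)) : Prop :=
  P = Measure.map obsMap μ

/-- Policy monotonicity: `D(z,1) ≥ D(z,0)` almost surely, for every judge `z`. -/
def policyMono (μ : Measure (PrimM K)) : Prop :=
  ∀ z : Fin K, μ {ω | pd ω z false ≤ pd ω z true} = 1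

/-- IV monotonicity: for every pair of judges, one is almost surely more lenient. -/
def ivMono (μ : Measure (PrimM K)) : Prop :=
  ∀ z z' : Fin K,
    μ {ω | pd ω z' false ≤ pd ω z false} = 1 ∨
    μ {ω | pd ω z false ≤ pd ω z' false} = 1

/-- The potential outcomes take values in the outcome set `𝒴` almost surely. -/
def suppY (𝒴 : Set ℝ) (μ : Measure (PrimM K)) : Prop :=
  μ {ω | ω.1 ∈ 𝒴 ∧ ω.2.1 ∈ 𝒴} = 1

/-- The average counterfactual outcome `θ = E[Y(D(Z,1))]`. -/
noncomputable def theta (μ : Measure (PrimM K)) : ℝ := ∫ ω, cfY ω ∂μ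

/-- The identified set for the average counterfactual outcome. -/
def ThetaI (P : Measure (ObsM K)) (fam : Set (Measure (PrimM K))) : Set ℝ :=
  {t | ∃ μ ∈ fam, generates μ P ∧ theta μ = t}

/-- Observed status-quo release rate `α₀ = P(D = 1)`. -/
noncomputable def alpha0 (P : Measure (ObsM K)) : ℝ := (P {o | o.2.1 = true}).toReal

/-- Observed conditional release probability `P(D = 1 | Z = z)`. -/
noncomputable def oPrD1Z (P : Measure (ObsM K)) (z : Fin K) : ℝ :=
  (P {o | o.2.1 = true ∧ o.2.2 = z}).toReal / (P {o | o.2.2 = z}).toReal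

/-- Observed conditional cdf `P(Y ≤ t | D = 1, Z = z)`. -/
noncomputable def oCdfD1Z (P : Measure (ObsM K)) (z : Fin K) (t : ℝ) : ℝ :=
  (P {o | o.1 ≤ t ∧ o.2.1 = true ∧ o.2.2 = z}).toReal
    / (P {o | o.2.1 = true ∧ o.2.2 = z}).toReal

/-- Observed conditional cdf `P(Y ≤ t | D = 1)`. -/
noncomputable def oCdfD1 (P : Measure (ObsM K)) (t : ℝ) : ℝ :=
  (P {o | o.1 ≤ t ∧ o.2.1 = true}).toReal / (P {o | o.2.1 = true}).toReal

/-- Lower bound `F^lb_{Y(1)}(t) = P(Y ≤ t | D=1, Z=z_max) · α_max`. -/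
noncomputable def FlbY1 (P : Measure (ObsM K)) (zmax : Fin K) (t : ℝ) : ℝ :=
  oCdfD1Z P zmax t * oPrD1Z P zmax

/-- Upper bound `F^ub_{Y(1)}(t) = P(Y ≤ t | D=1, Z=z_max) · α_max + 1 − α_max`. -/
noncomputable def FubY1 (P : Measure (ObsM K)) (zmax : Fin K) (t : ℝ) : ℝ :=
  oCdfD1Z P zmax t * oPrD1Z P zmax + 1 - oPrD1Z P zmax

/-- Lower bound `F^lb_{Y(1)∣D(Z,0)=0}(t)`. -/
noncomputable def FlbD0 (P : Measure (ObsM K)) (zmax : Fin K) (t : ℝ) : ℝ :=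
  max ((FlbY1 P zmax t - alpha0 P * oCdfD1 P t) / (1 - alpha0 P)) 0

/-- Upper bound `F^ub_{Y(1)∣D(Z,0)=0}(t)`. -/
noncomputable def FubD0 (P : Measure (ObsM K)) (zmax : Fin K) (t : ℝ) : ℝ :=
  min ((FubY1 P zmax t - alpha0 P * oCdfD1 P t) / (1 - alpha0 P)) 1

/-- Lower bound `F^lb(t)` on the policy-complier outcome cdf. -/
noncomputable def Flb (P : Measure (ObsM K)) (zmax : Fin K) (α t : ℝ) : ℝ :=
  max ((1 - alpha0 P) / (α - alpha0 P) * FlbD0 P zmax t - (1 - α) / (α - alpha0 P)) 0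

/-- Upper bound `F^ub(t)` on the policy-complier outcome cdf. -/
noncomputable def Fub (P : Measure (ObsM K)) (zmax : Fin K) (α t : ℝ) : ℝ :=
  min ((1 - alpha0 P) / (α - alpha0 P) * FubD0 P zmax t) 1

/-- Conditional cdf of `Y(1)` given the policy compliers `{D(Z,1) > D(Z,0)}`. -/
noncomputable def cdfY1Compl (μ : Measure (PrimM K)) (t : ℝ) : ℝ :=
  (μ {ω | ω.2.1 ≤ t ∧ pd ω (pz ω) false < pd ω (pz ω) true}).toReal
    / (μ {ω | pd ω (pz ω) false < pd ω (pz ω) true}).toReal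

/-! ### Auxiliary lemmas -/

section Aux

lemma measurable_pzf : Measurable (pz (K := K)) := measurable_snd.snd.snd

lemma measurable_pdf (z : Fin K) (a : Bool) : Measurable fun ω : PrimM K => pd ω z a :=
  (measurable_pi_apply a).comp ((measurable_pi_apply z).comp measurable_snd.snd.fst)

lemma msZ (z : Fin K) : MeasurableSet {ω : PrimM K | pz ω = z} :=
  measurable_pzf (measurableSet_singleton z)

lemma msD (z : Fin K) (a : Bool) : MeasurableSet {ω : PrimM K | pd ω z a = true} :=
  measurable_pdf z a (measurableSet_singleton true)

lemma DZ_eq (a : Bool) :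
    {ω : PrimM K | pd ω (pz ω) a = true}
      = ⋃ z, ({ω | pz ω = z} ∩ {ω | pd ω z a = true}) := by
  ext ω
  simp only [Set.mem_setOf_eq, Set.mem_iUnion, Set.mem_inter_iff]
  exact ⟨fun h => ⟨pz ω, rfl, h⟩, fun ⟨z, hz, h⟩ => by rw [hz]; exact h⟩

lemma msDZ (a : Bool) : MeasurableSet {ω : PrimM K | pd ω (pz ω) a = true} := by
  rw [DZ_eq]; exact MeasurableSet.iUnion fun z => (msZ z).inter (msD z a)

lemma measurable_obsD : Measurable (obsD (K := K)) := by
  apply measurable_to_countable'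
  intro b
  cases b
  · have h : obsD (K := K) ⁻¹' {false} = {ω : PrimM K | pd ω (pz ω) false = true}ᶜ := by
      ext ω; simp [obsD]
    rw [h]; exact (msDZ false).compl
  · exact msDZ false

lemma measurable_obsY : Measurable (obsY (K := K)) := by
  unfold obsY
  exact Measurable.ite (measurable_obsD (measurableSet_singleton true))
    measurable_snd.fst measurable_fst

lemma measurable_obsMap : Measurable (obsMap (K := K)) :=
  measurable_obsY.prodMk (measurable_obsD.prodMk measurable_pzf)

lemma gen_apply {μ : Measure (PrimM K)} {P : Measure (ObsM K)}
    (hgen : generates μ P) {S : Set (ObsM K)} (hS : MeasurableSet S) :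
    P S = μ (obsMap ⁻¹' S) := by
  rw [hgen]; exact Measure.map_apply measurable_obsMap hS

lemma msA (z : Fin K) :
    MeasurableSet {v : ℝ × ℝ × (Fin K → Bool → Bool) | v.2.2 z false = true} := by
  have h : Measurable fun v : ℝ × ℝ × (Fin K → Bool → Bool) => v.2.2 z false :=
    (measurable_pi_apply false).comp ((measurable_pi_apply z).comp measurable_snd.snd)
  exact h (measurableSet_singleton true)

lemma msA2 (z : Fin K) (t : ℝ) :
    MeasurableSet {v : ℝ × ℝ × (Fin K → Bool → Bool) | v.2.1 ≤ t ∧ v.2.2 z false = true} :=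
  (measurable_snd.fst measurableSet_Iic).inter (msA z)

lemma key1 {μ : Measure (PrimM K)} (hvalid : IVvalid μ) (z : Fin K) :
    μ {ω : PrimM K | pd ω z false = true ∧ pz ω = z}
      = μ {ω : PrimM K | pd ω z false = true} * μ {ω : PrimM K | pz ω = z} :=
  hvalid {v | v.2.2 z false = true} z (msA z)

lemma key2 {μ : Measure (PrimM K)} (hvalid : IVvalid μ) (z : Fin K) (t : ℝ) :
    μ {ω : PrimM K | (ω.2.1 ≤ t ∧ pd ω z false = true) ∧ pz ω = z}
      = μ {ω : PrimM K | ω.2.1 ≤ t ∧ pd ω z false = true} * μ {ω : PrimM K | pz ω = z} :=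
  hvalid {v | v.2.1 ≤ t ∧ v.2.2 z false = true} z (msA2 z t)

lemma preim1 (z : Fin K) :
    obsMap ⁻¹' {o : ObsM K | o.2.2 = z} = {ω : PrimM K | pz ω = z} := rfl

lemma preim2 :
    obsMap (K := K) ⁻¹' {o : ObsM K | o.2.1 = true}
      = {ω : PrimM K | pd ω (pz ω) false = true} := rfl

lemma preim3 (z : Fin K) :
    obsMap ⁻¹' {o : ObsM K | o.2.1 = true ∧ o.2.2 = z}
      = {ω : PrimM K | pd ω z false = true ∧ pz ω = z} := by
  ext ω
  simp only [Set.mem_preimage, obsMap, Set.mem_setOf_eq]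
  constructor
  · rintro ⟨h1, h2⟩; subst h2; exact ⟨h1, rfl⟩
  · rintro ⟨h1, h2⟩; subst h2; exact ⟨h1, rfl⟩

lemma preim4 (z : Fin K) (t : ℝ) :
    obsMap ⁻¹' {o : ObsM K | o.1 ≤ t ∧ o.2.1 = true ∧ o.2.2 = z}
      = {ω : PrimM K | (ω.2.1 ≤ t ∧ pd ω z false = true) ∧ pz ω = z} := by
  ext ω
  simp only [Set.mem_preimage, obsMap, Set.mem_setOf_eq]
  constructor
  · rintro ⟨hy, hd, hz⟩
    subst hz
    exact ⟨⟨by simpa [obsY, hd] using hy, hd⟩, rfl⟩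
  · rintro ⟨⟨hy, hd⟩, hz⟩
    subst hz
    exact ⟨by simpa [obsY, obsD, hd] using hy, hd, rfl⟩

lemma preim5 (t : ℝ) :
    obsMap (K := K) ⁻¹' {o : ObsM K | o.1 ≤ t ∧ o.2.1 = true}
      = {ω : PrimM K | ω.2.1 ≤ t ∧ pd ω (pz ω) false = true} := by
  ext ω
  simp only [Set.mem_preimage, obsMap, Set.mem_setOf_eq]
  constructor
  · rintro ⟨hy, hd⟩
    exact ⟨by simpa [obsY, hd] using hy, hd⟩
  · rintro ⟨hy, hd⟩
    exact ⟨by simpa [obsY, obsD, hd] using hy, hd⟩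

lemma real_bounds (a0 α c g q r N u : ℝ) (hα1 : α ≤ 1) (hc : 0 < c) (hch : a0 + c = α)
    (h1a : 0 < 1 - a0) (hgq : g - q ≤ r) (hru : r ≤ u - q) (hr1a : r ≤ 1 - a0) (hNr : N ≤ r)
    (hNc : N ≤ c) (hN : 0 ≤ N) (hrN : r ≤ N + (1 - α)) :
    max ((1 - a0) / (α - a0) * max ((g - q) / (1 - a0)) 0 - (1 - α) / (α - a0)) 0 ≤ N / c
    ∧ N / c ≤ min ((1 - a0) / (α - a0) * min ((u - q) / (1 - a0)) 1) 1 := by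
  rw [show α - a0 = c by linarith]
  have e1 : (1 - a0) / c * max ((g - q) / (1 - a0)) 0 = max (g - q) 0 / c := by
    rw [div_mul_eq_mul_div, mul_max_of_nonneg _ _ h1a.le, mul_div_cancel₀ _ h1a.ne', mul_zero]
  have e2 : (1 - a0) / c * min ((u - q) / (1 - a0)) 1 = min (u - q) (1 - a0) / c := by
    rw [div_mul_eq_mul_div, mul_min_of_nonneg _ _ h1a.le, mul_div_cancel₀ _ h1a.ne', mul_one]
  constructor
  · apply max_le _ (div_nonneg hN hc.le)
    rw [e1, div_sub_div_same, div_le_div_iff_of_pos_right hc]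
    have h1 : max (g - q) 0 ≤ N + (1 - α) := max_le (by linarith) (by linarith)
    linarith
  · refine le_min ?_ ((div_le_one hc).mpr hNc)
    rw [e2, div_le_div_iff_of_pos_right hc]
    exact le_min (by linarith) (by linarith)

end Aux

/-- Lemma 1: bounds on the conditional cdf of `Y(1)` for policy
compliers, for any primitive distribution in the identified set of `𝒫*_α`. -/
theorem statement6 {K : ℕ} (𝒴 : Set ℝ) (hY : IsCompact 𝒴) (h0 : (0 : ℝ) ∈ 𝒴)
    (α : ℝ) (hα : α ∈ Set.Icc (0 : ℝ) 1)
    (P : Measure (ObsM K)) [IsProbabilityMeasure P]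
    (hPz : ∀ z : Fin K, 0 < P {o | o.2.2 = z})
    (zmax : Fin K) (hzmax : ∀ z : Fin K, oPrD1Z P z ≤ oPrD1Z P zmax)
    (hα0 : alpha0 P < α)
    (μ : Measure (PrimM K)) [IsProbabilityMeasure μ]
    (hvalid : IVvalid μ) (hpm : policyMono μ) (hsupp : suppY 𝒴 μ)
    (hquota : μ {ω | pd ω (pz ω) true = true} = ENNReal.ofReal α)
    (hY0 : μ {ω | ω.1 = 0} = 1)
    (hgen : generates μ P) :
    ∀ t : ℝ, Flb P zmax α t ≤ cdfY1Compl μ t ∧ cdfY1Compl μ t ≤ Fub P zmax α t := by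
  haveI : IsFiniteMeasure μ := ⟨by rw [measure_univ]; exact ENNReal.one_lt_top⟩
  haveI : IsFiniteMeasure P := ⟨by rw [measure_univ]; exact ENNReal.one_lt_top⟩
  intro t
  -- positivity of the instrument cell at `zmax`
  have msO1 : MeasurableSet {o : ObsM K | o.2.2 = zmax} :=
    measurable_snd.snd (measurableSet_singleton zmax)
  have msO2 : MeasurableSet {o : ObsM K | o.2.1 = true} :=
    measurable_snd.fst (measurableSet_singleton true)
  have msO3 : MeasurableSet {o : ObsM K | o.2.1 = true ∧ o.2.2 = zmax} :=
    msO2.inter msO1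
  have msO4 : MeasurableSet {o : ObsM K | o.1 ≤ t ∧ o.2.1 = true ∧ o.2.2 = zmax} :=
    (measurable_fst measurableSet_Iic).inter msO3
  have msO5 : MeasurableSet {o : ObsM K | o.1 ≤ t ∧ o.2.1 = true} :=
    (measurable_fst measurableSet_Iic).inter msO2
  have hwZ : 0 < (μ {ω : PrimM K | pz ω = zmax}).toReal := by
    have h := hPz zmax
    rw [gen_apply hgen msO1, preim1] at h
    exact ENNReal.toReal_pos h.ne' (measure_ne_top μ _)
  -- identification of `oPrD1Z`
  have hPr : oPrD1Z P zmax = (μ {ω : PrimM K | pd ω zmax false = true}).toReal := by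
    unfold oPrD1Z
    rw [gen_apply hgen msO3, gen_apply hgen msO1, preim3, preim1, key1 hvalid,
      ENNReal.toReal_mul, mul_div_assoc, div_self hwZ.ne', mul_one]
  -- identification of `oCdfD1Z * oPrD1Z`
  have hCdf : oCdfD1Z P zmax t * oPrD1Z P zmax
      = (μ {ω : PrimM K | ω.2.1 ≤ t ∧ pd ω zmax false = true}).toReal := by
    rw [hPr]
    unfold oCdfD1Z
    rw [gen_apply hgen msO4, gen_apply hgen msO3, preim4, preim3, key2 hvalid,
      key1 hvalid, ENNReal.toReal_mul, ENNReal.toReal_mul,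
      mul_div_mul_right _ _ hwZ.ne']
    by_cases hd : (μ {ω : PrimM K | pd ω zmax false = true}).toReal = 0
    · have hD0 : μ {ω : PrimM K | pd ω zmax false = true} = 0 := by
        rcases (ENNReal.toReal_eq_zero_iff _).mp hd with h | h
        · exact h
        · exact absurd h (measure_ne_top μ _)
      have hG : μ {ω : PrimM K | ω.2.1 ≤ t ∧ pd ω zmax false = true} = 0 :=
        measure_mono_null (fun ω h => h.2) hD0
      rw [hd, hG]
      simp
    · rw [div_mul_cancel₀ _ hd]
  -- identification of `alpha0` and of `alpha0 * oCdfD1`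
  have ha0 : alpha0 P = (μ {ω : PrimM K | pd ω (pz ω) false = true}).toReal := by
    unfold alpha0
    rw [gen_apply hgen msO2, preim2]
  have hq : alpha0 P * oCdfD1 P t
      = (μ {ω : PrimM K | ω.2.1 ≤ t ∧ pd ω (pz ω) false = true}).toReal := by
    unfold oCdfD1
    rw [gen_apply hgen msO5, gen_apply hgen msO2, preim5, preim2, ha0]
    by_cases ha : (μ {ω : PrimM K | pd ω (pz ω) false = true}).toReal = 0
    · have hD0 : μ {ω : PrimM K | pd ω (pz ω) false = true} = 0 := by
        rcases (ENNReal.toReal_eq_zero_iff _).mp ha with h | h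
        · exact h
        · exact absurd h (measure_ne_top μ _)
      have hG : μ {ω : PrimM K | ω.2.1 ≤ t ∧ pd ω (pz ω) false = true} = 0 :=
        measure_mono_null (fun ω h => h.2) hD0
      rw [ha, hG]
      simp
    · exact mul_div_cancel₀ _ ha
  -- policy monotonicity: `D(Z,0) ≤ D(Z,1)` almost surely
  have hbad : μ ({ω : PrimM K | pd ω (pz ω) false = true}
      \ {ω : PrimM K | pd ω (pz ω) true = true}) = 0 := by
    have hz0 : ∀ z : Fin K, μ {ω : PrimM K | ¬ pd ω z false ≤ pd ω z true} = 0 := by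
      intro z
      have hseteq : {ω : PrimM K | pd ω z false ≤ pd ω z true}
          = {ω : PrimM K | pd ω z false = true}ᶜ ∪ {ω : PrimM K | pd ω z true = true} := by
        ext ω
        simp [Bool.le_iff_imp, imp_iff_not_or]
      have hms : MeasurableSet {ω : PrimM K | pd ω z false ≤ pd ω z true} := by
        rw [hseteq]; exact (msD z false).compl.union (msD z true)
      have h := (prob_compl_eq_zero_iff hms).mpr (hpm z)
      simpa [Set.compl_setOf] using h
    refine measure_mono_null ?_
      (measure_iUnion_null (s := fun z => {ω : PrimM K | ¬ pd ω z false ≤ pd ω z true}) hz0)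
    rintro ω ⟨h0, h1⟩
    refine Set.mem_iUnion.mpr ⟨pz ω, ?_⟩
    have h1' : pd ω (pz ω) true = false := by simpa using h1
    simp only [Set.mem_setOf_eq] at h0 ⊢
    intro hle
    rw [h0, h1'] at hle
    exact absurd hle (by decide)
  -- `μ S0 + μ C = μ S1`
  have hsplit : μ {ω : PrimM K | pd ω (pz ω) false = true}
        + μ {ω : PrimM K | pd ω (pz ω) false < pd ω (pz ω) true}
      = μ {ω : PrimM K | pd ω (pz ω) true = true} := by
    have h1 := measure_inter_add_diff (μ := μ) {ω : PrimM K | pd ω (pz ω) true = true} (msDZ false)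
    have h2 := measure_inter_add_diff (μ := μ) {ω : PrimM K | pd ω (pz ω) false = true} (msDZ true)
    rw [hbad, add_zero] at h2
    have hCeq : {ω : PrimM K | pd ω (pz ω) true = true}
          \ {ω : PrimM K | pd ω (pz ω) false = true}
        = {ω : PrimM K | pd ω (pz ω) false < pd ω (pz ω) true} := by
      ext ω
      simp [Set.mem_diff, Bool.lt_iff, Bool.not_eq_true, and_comm]
    rw [hCeq, Set.inter_comm, h2] at h1
    exact h1
  have hsum : (μ {ω : PrimM K | pd ω (pz ω) false = true}).toReal
      + (μ {ω : PrimM K | pd ω (pz ω) false < pd ω (pz ω) true}).toReal = α := by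
    have h := congrArg ENNReal.toReal hsplit
    rw [ENNReal.toReal_add (measure_ne_top μ _) (measure_ne_top μ _), hquota,
      ENNReal.toReal_ofReal hα.1] at h
    exact h
  rw [ha0] at hα0
  have hcpos : 0 < (μ {ω : PrimM K | pd ω (pz ω) false < pd ω (pz ω) true}).toReal := by
    linarith
  have h1a : 0 < 1 - (μ {ω : PrimM K | pd ω (pz ω) false = true}).toReal := by
    linarith [hα.2]
  -- decomposition of `{Y(1) ≤ t}` by the value of `D(Z,0)`
  have hmqr := measure_inter_add_diff (μ := μ) {ω : PrimM K | ω.2.1 ≤ t} (msDZ false)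
  have hmqrR : (μ {ω : PrimM K | ω.2.1 ≤ t ∧ pd ω (pz ω) false = true}).toReal
      + (μ ({ω : PrimM K | ω.2.1 ≤ t} \ {ω : PrimM K | pd ω (pz ω) false = true})).toReal
      = (μ {ω : PrimM K | ω.2.1 ≤ t}).toReal := by
    rw [show {ω : PrimM K | ω.2.1 ≤ t ∧ pd ω (pz ω) false = true}
        = {ω : PrimM K | ω.2.1 ≤ t} ∩ {ω : PrimM K | pd ω (pz ω) false = true} from rfl,
      ← ENNReal.toReal_add (measure_ne_top μ _) (measure_ne_top μ _), hmqr]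
  -- Manski-type bounds at `zmax`
  have hgm : (μ {ω : PrimM K | ω.2.1 ≤ t ∧ pd ω zmax false = true}).toReal
      ≤ (μ {ω : PrimM K | ω.2.1 ≤ t}).toReal :=
    ENNReal.toReal_mono (measure_ne_top μ _) (measure_mono fun ω h => h.1)
  have hDc : (μ {ω : PrimM K | pd ω zmax false = true}ᶜ).toReal
      = 1 - (μ {ω : PrimM K | pd ω zmax false = true}).toReal := by
    rw [prob_compl_eq_one_sub (msD zmax false),
      ENNReal.toReal_sub_of_le prob_le_one ENNReal.one_ne_top, ENNReal.toReal_one]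
  have hmg : (μ {ω : PrimM K | ω.2.1 ≤ t}).toReal
      ≤ (μ {ω : PrimM K | ω.2.1 ≤ t ∧ pd ω zmax false = true}).toReal
        + (1 - (μ {ω : PrimM K | pd ω zmax false = true}).toReal) := by
    rw [← hDc, ← ENNReal.toReal_add (measure_ne_top μ _) (measure_ne_top μ _)]
    refine ENNReal.toReal_mono
      (ENNReal.add_ne_top.mpr ⟨measure_ne_top μ _, measure_ne_top μ _⟩) ?_
    refine (measure_mono ?_).trans (measure_union_le _ _)
    intro ω hω
    by_cases h : pd ω zmax false = true
    · exact Or.inl ⟨hω, h⟩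
    · exact Or.inr h
  -- the complement of the quota event
  have hS1c : (μ {ω : PrimM K | pd ω (pz ω) true = true}ᶜ).toReal = 1 - α := by
    rw [prob_compl_eq_one_sub (msDZ true), hquota,
      ENNReal.toReal_sub_of_le (ENNReal.ofReal_le_one.mpr hα.2) ENNReal.one_ne_top,
      ENNReal.toReal_one, ENNReal.toReal_ofReal hα.1]
  -- comparisons between the complier event and `{D(Z,0)=0}`
  have hNr : (μ {ω : PrimM K | ω.2.1 ≤ t ∧ pd ω (pz ω) false < pd ω (pz ω) true}).toReal
      ≤ (μ ({ω : PrimM K | ω.2.1 ≤ t} \ {ω : PrimM K | pd ω (pz ω) false = true})).toReal := by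
    refine ENNReal.toReal_mono (measure_ne_top μ _) (measure_mono ?_)
    rintro ω ⟨h1, h2⟩
    refine ⟨h1, ?_⟩
    have h3 := (Bool.lt_iff.mp h2).1
    simp [Set.mem_setOf_eq, h3]
  have hrN : (μ ({ω : PrimM K | ω.2.1 ≤ t} \ {ω : PrimM K | pd ω (pz ω) false = true})).toReal
      ≤ (μ {ω : PrimM K | ω.2.1 ≤ t ∧ pd ω (pz ω) false < pd ω (pz ω) true}).toReal
        + (1 - α) := by
    rw [← hS1c, ← ENNReal.toReal_add (measure_ne_top μ _) (measure_ne_top μ _)]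
    refine ENNReal.toReal_mono
      (ENNReal.add_ne_top.mpr ⟨measure_ne_top μ _, measure_ne_top μ _⟩) ?_
    refine (measure_mono ?_).trans (measure_union_le _ _)
    rintro ω ⟨h1, h2⟩
    by_cases hd1 : pd ω (pz ω) true = true
    · exact Or.inl ⟨h1, Bool.lt_iff.mpr ⟨by simpa using h2, hd1⟩⟩
    · exact Or.inr hd1
  have hr1a : (μ ({ω : PrimM K | ω.2.1 ≤ t} \ {ω : PrimM K | pd ω (pz ω) false = true})).toReal
      ≤ 1 - (μ {ω : PrimM K | pd ω (pz ω) false = true}).toReal := by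
    have h1 : (μ {ω : PrimM K | pd ω (pz ω) false = true}ᶜ).toReal
        = 1 - (μ {ω : PrimM K | pd ω (pz ω) false = true}).toReal := by
      rw [prob_compl_eq_one_sub (msDZ false),
        ENNReal.toReal_sub_of_le prob_le_one ENNReal.one_ne_top, ENNReal.toReal_one]
    rw [← h1]
    exact ENNReal.toReal_mono (measure_ne_top μ _) (measure_mono fun ω h => h.2)
  have hNc : (μ {ω : PrimM K | ω.2.1 ≤ t ∧ pd ω (pz ω) false < pd ω (pz ω) true}).toReal
      ≤ (μ {ω : PrimM K | pd ω (pz ω) false < pd ω (pz ω) true}).toReal :=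
    ENNReal.toReal_mono (measure_ne_top μ _) (measure_mono fun ω h => h.2)
  -- conclude by pure real arithmetic
  unfold Flb Fub FlbD0 FubD0 FlbY1 FubY1 cdfY1Compl
  rw [hCdf, hPr, hq, ha0]
  exact real_bounds
    ((μ {ω : PrimM K | pd ω (pz ω) false = true}).toReal) α
    ((μ {ω : PrimM K | pd ω (pz ω) false < pd ω (pz ω) true}).toReal)
    ((μ {ω : PrimM K | ω.2.1 ≤ t ∧ pd ω zmax false = true}).toReal)
    ((μ {ω : PrimM K | ω.2.1 ≤ t ∧ pd ω (pz ω) false = true}).toReal)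
    ((μ ({ω : PrimM K | ω.2.1 ≤ t} \ {ω : PrimM K | pd ω (pz ω) false = true})).toReal)
    ((μ {ω : PrimM K | ω.2.1 ≤ t ∧ pd ω (pz ω) false < pd ω (pz ω) true}).toReal)
    ((μ {ω : PrimM K | ω.2.1 ≤ t ∧ pd ω zmax false = true}).toReal + 1
      - (μ {ω : PrimM K | pd ω zmax false = true}).toReal)
    hα.2 hcpos hsum h1a (by linarith) (by linarith) hr1a hNr hNc
    ENNReal.toReal_nonneg hrN

end IVM
end
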